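/- arXiv:1412.1067 — 2 statements merged into one kernel-verified Lean document; each statement's English description precedes it below -/
import Mathlib

section
/- Fix ξ ∈ [0,1], γ > γ_1, and a real a₁ > 0 with a₁^{2(1−ξ)} > S, and set k₀(γ) := c_1/((1 + γ_1/γ)² + 1). Then for every a ≥ a₁ and every complex ζ with Re ζ > γ, one has ℓ_a(ζ) ≠ 0 and a^{ξ}/|ℓ_a(ζ)| ≤ max( 1/√(2 γ k₀(γ)), 1/(a₁^{2−ξ} − a₁^{ξ} S) ). In particular sup over a ≥ a₁ and Re ζ > γ of a^{ξ}/|ℓ_a(ζ)| is finite. -/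
/-!
Write `ζ = x + iy` and `W = ∑ c_k/(ζ + γ_k)`, so `ℓ_a(ζ) = ζ² + a² - a^{2ξ} W`. Since
`Re(ζ + γ_k) ≥ γ_k`, `|W| ≤ S`, and `Im W = -y T` with `T = ∑ c_k/|ζ + γ_k|² ≥ c_1/|ζ + γ_1|²`.
If `y² ≤ x²`, then `Re ℓ_a(ζ) ≥ a² - a^{2ξ} S = a^ξ (a^{2-ξ} - a^ξ S)`, and the last factor is
increasing in `a`, hence at least its value at `a₁`. If `y² > x²`, then
`Im ℓ_a(ζ) = y (2x + a^{2ξ} T)`, so by AM-GM `|ℓ_a(ζ)|² ≥ 8 x a^{2ξ} y² T`, and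
`y² T ≥ k₀(γ)` because `|ζ + γ_1|² ≤ y² ((1 + γ_1/γ)² + 1)` when `x > γ`.
-/

open Complex

lemma norm_ofReal_div_add_ofReal_le {ζ : ℂ} {c γ : ℝ} (hc : 0 ≤ c) (hγ : 0 < γ)
    (hζ : 0 ≤ ζ.re) : ‖(c : ℂ) / (ζ + γ)‖ ≤ c / γ := by
  rw [norm_div, norm_real, Real.norm_of_nonneg hc]
  refine div_le_div_of_nonneg_left hc hγ ?_
  calc γ ≤ (ζ + γ).re := by simp [hζ]
    _ ≤ ‖ζ + γ‖ := re_le_norm _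

lemma div_normSq_add_ofReal_le {ζ : ℂ} {c γ : ℝ} (hc : 0 ≤ c) (hγ : 0 < γ) (hζ : 0 < ζ.re) :
    c / normSq (ζ + γ) ≤ ζ.re⁻¹ * (c / γ) := by
  rw [inv_mul_eq_div, div_div]
  refine div_le_div_of_nonneg_left hc (by positivity) ?_
  rw [normSq_apply]
  simp only [add_re, ofReal_re, add_im, ofReal_im, add_zero]
  nlinarith [mul_self_nonneg ζ.im]

lemma im_ofReal_div (c : ℝ) (w : ℂ) : ((c : ℂ) / w).im = -w.im * (c / normSq w) := by
  rw [div_im]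
  simp only [ofReal_im, zero_mul, zero_div, ofReal_re, zero_sub]
  ring

section StieltjesSum

variable {ι : Type*} {c γ : ι → ℝ} {ζ : ℂ}

lemma summable_ofReal_div_add (hc : ∀ i, 0 ≤ c i) (hγ : ∀ i, 0 < γ i) (hζ : 0 ≤ ζ.re)
    (hs : Summable fun i => c i / γ i) : Summable fun i => (c i : ℂ) / (ζ + γ i) :=
  hs.of_norm_bounded fun i => norm_ofReal_div_add_ofReal_le (hc i) (hγ i) hζ

lemma norm_tsum_ofReal_div_add_le (hc : ∀ i, 0 ≤ c i) (hγ : ∀ i, 0 < γ i) (hζ : 0 ≤ ζ.re)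
    (hs : Summable fun i => c i / γ i) :
    ‖∑' i, (c i : ℂ) / (ζ + γ i)‖ ≤ ∑' i, c i / γ i :=
  tsum_of_norm_bounded hs.hasSum fun i => norm_ofReal_div_add_ofReal_le (hc i) (hγ i) hζ

lemma summable_div_normSq_add (hc : ∀ i, 0 ≤ c i) (hγ : ∀ i, 0 < γ i) (hζ : 0 < ζ.re)
    (hs : Summable fun i => c i / γ i) : Summable fun i => c i / normSq (ζ + γ i) :=
  .of_nonneg_of_le (fun i => div_nonneg (hc i) (normSq_nonneg _))
    (fun i => div_normSq_add_ofReal_le (hc i) (hγ i) hζ) (hs.mul_left _)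

lemma im_tsum_ofReal_div_add (hc : ∀ i, 0 ≤ c i) (hγ : ∀ i, 0 < γ i) (hζ : 0 ≤ ζ.re)
    (hs : Summable fun i => c i / γ i) :
    (∑' i, (c i : ℂ) / (ζ + γ i)).im = -ζ.im * ∑' i, c i / normSq (ζ + γ i) := by
  rw [im_tsum (summable_ofReal_div_add hc hγ hζ hs), ← tsum_mul_left]
  simp [im_ofReal_div]

end StieltjesSum

lemma div_sq_add_one_le_im_sq_mul_div_normSq {ζ : ℂ} {c γ γ' : ℝ} (hc : 0 ≤ c) (hγ : 0 ≤ γ)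
    (hγ' : 0 < γ') (hre : γ' ≤ ζ.re) (him : ζ.re ^ 2 ≤ ζ.im ^ 2) :
    c / ((1 + γ / γ') ^ 2 + 1) ≤ ζ.im ^ 2 * (c / normSq (ζ + γ)) := by
  have hx : 0 < ζ.re := hγ'.trans_le hre
  have hy : 0 < ζ.im ^ 2 := by nlinarith
  have hN : 0 < normSq (ζ + γ) := by
    rw [normSq_apply]; simp only [add_re, ofReal_re, add_im, ofReal_im, add_zero]; nlinarith
  have hq : γ ≤ ζ.re * (γ / γ') := by
    rw [mul_div_assoc', le_div_iff₀ hγ']; nlinarith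
  rw [mul_div_assoc', div_le_div_iff₀ (by positivity) hN, normSq_apply]
  simp only [add_re, ofReal_re, add_im, ofReal_im, add_zero]
  have hxq : (ζ.re + γ) ^ 2 ≤ ζ.im ^ 2 * (1 + γ / γ') ^ 2 := by
    calc (ζ.re + γ) ^ 2 ≤ (ζ.re * (1 + γ / γ')) ^ 2 := by gcongr; linarith
      _ = ζ.re ^ 2 * (1 + γ / γ') ^ 2 := by ring
      _ ≤ _ := by gcongr
  nlinarith

lemma sub_mul_le_norm_sq_add_sq_sub_mul {ζ W : ℂ} {a b S : ℝ} (hζ : ζ.im ^ 2 ≤ ζ.re ^ 2)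
    (hb : 0 ≤ b) (hW : ‖W‖ ≤ S) : a ^ 2 - b * S ≤ ‖ζ ^ 2 + (a : ℂ) ^ 2 - (b : ℂ) * W‖ := by
  have hre : W.re ≤ S := (re_le_norm W).trans hW
  refine le_trans ?_ (re_le_norm _)
  simp only [sq, sub_re, add_re, mul_re, ofReal_re, ofReal_im, zero_mul, sub_zero]
  nlinarith

lemma mul_im_sq_mul_le_norm_sq_add_sq_sub_mul_sq {ζ W : ℂ} {a b T : ℝ}
    (hW : W.im = -ζ.im * T) :
    8 * ζ.re * b * (ζ.im ^ 2 * T) ≤ ‖ζ ^ 2 + (a : ℂ) ^ 2 - (b : ℂ) * W‖ ^ 2 := by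
  have him : (ζ ^ 2 + (a : ℂ) ^ 2 - (b : ℂ) * W).im = ζ.im * (2 * ζ.re + b * T) := by
    simp only [sq, sub_im, add_im, mul_im, ofReal_re, ofReal_im, hW]; ring
  calc 8 * ζ.re * b * (ζ.im ^ 2 * T)
      ≤ (ζ.im * (2 * ζ.re + b * T)) ^ 2 := by
        nlinarith [mul_nonneg (sq_nonneg ζ.im) (sq_nonneg (2 * ζ.re - b * T))]
    _ = |(ζ ^ 2 + (a : ℂ) ^ 2 - (b : ℂ) * W).im| ^ 2 := by rw [sq_abs, him]
    _ ≤ _ := by gcongr; exact abs_im_le_norm _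

lemma rpow_two_sub_sub_rpow_mul_eq {x : ℝ} (hx : 0 < x) (ξ S : ℝ) :
    x ^ (2 - ξ) - x ^ ξ * S = x ^ ξ * (x ^ (2 * (1 - ξ)) - S) := by
  rw [mul_sub, ← Real.rpow_add hx]
  ring_nf

lemma rpow_two_sub_sub_rpow_mul_le {ξ S a₁ a : ℝ} (hξ : ξ ∈ Set.Icc (0 : ℝ) 1) (ha₁ : 0 < a₁)
    (ha : a₁ ≤ a) (hS : S ≤ a₁ ^ (2 * (1 - ξ))) :
    a₁ ^ (2 - ξ) - a₁ ^ ξ * S ≤ a ^ (2 - ξ) - a ^ ξ * S := by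
  rw [rpow_two_sub_sub_rpow_mul_eq ha₁, rpow_two_sub_sub_rpow_mul_eq (ha₁.trans_le ha)]
  have hexp : 0 ≤ 2 * (1 - ξ) := by linarith [hξ.2]
  exact mul_le_mul (Real.rpow_le_rpow ha₁.le ha hξ.1)
    (sub_le_sub_right (Real.rpow_le_rpow ha₁.le ha hexp) S) (sub_nonneg.2 hS)
    (Real.rpow_nonneg (ha₁.trans_le ha).le ξ)

lemma ne_zero_and_div_norm_le {z : ℂ} {p m : ℝ} (hp : 0 < p) (hm : 0 < m) (h : p * m ≤ ‖z‖) :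
    z ≠ 0 ∧ p / ‖z‖ ≤ 1 / m := by
  have hz : 0 < ‖z‖ := (mul_pos hp hm).trans_le h
  refine ⟨norm_pos_iff.1 hz, ?_⟩
  rw [div_le_div_iff₀ hz hm]
  linarith

theorem stmt_5_general
    (c γs : ℕ → ℝ)
    (hc : ∀ j, 0 < c j)
    (hγ0 : 0 < γs 0)
    (hγmono : StrictMono γs)
    (hSsum : Summable fun j => c j / γs j)
    (ξ : ℝ) (hξ : ξ ∈ Set.Icc (0:ℝ) 1)
    (γ' : ℝ) (hγ' : γs 0 < γ')
    (a₁ : ℝ) (ha₁ : 0 < a₁) (ha₁S : (∑' j, c j / γs j) < a₁ ^ (2 * (1 - ξ)))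
    (k₀ : ℝ) (hk₀ : k₀ = c 0 / ((1 + γs 0 / γ') ^ 2 + 1))
    (ℓ : ℝ → ℂ → ℂ)
    (hℓ : ∀ a ζ, ℓ a ζ = ζ ^ 2 + (a : ℂ) ^ 2
        - ((a ^ (2 * ξ) : ℝ) : ℂ) * ∑' k, (c k : ℂ) / (ζ + (γs k : ℂ))) :
    ∀ a : ℝ, a₁ ≤ a → ∀ ζ : ℂ, γ' < ζ.re →
      ℓ a ζ ≠ 0 ∧
      a ^ ξ / ‖ℓ a ζ‖ ≤ max (1 / Real.sqrt (2 * γ' * k₀))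
        (1 / (a₁ ^ (2 - ξ) - a₁ ^ ξ * ∑' j, c j / γs j)) := by
  intro a ha ζ hζ
  have hγ'pos : 0 < γ' := hγ0.trans hγ'
  have hre : 0 < ζ.re := hγ'pos.trans hζ
  have hcnn : ∀ k, 0 ≤ c k := fun k => (hc k).le
  have hγpos : ∀ k, 0 < γs k := fun k => hγ0.trans_le (hγmono.monotone k.zero_le)
  have hapos : 0 < a := ha₁.trans_le ha
  have haξ : 0 < a ^ ξ := Real.rpow_pos_of_pos hapos ξ
  have ha2ξ : a ^ (2 * ξ) = (a ^ ξ) ^ 2 := by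
    rw [mul_comm, Real.rpow_mul hapos.le, Real.rpow_two]
  rw [hℓ]
  rcases le_or_gt (ζ.im ^ 2) (ζ.re ^ 2) with hsmall | hlarge
  · have hD₁ : 0 < a₁ ^ (2 - ξ) - a₁ ^ ξ * ∑' j, c j / γs j := by
      rw [rpow_two_sub_sub_rpow_mul_eq ha₁]
      exact mul_pos (Real.rpow_pos_of_pos ha₁ ξ) (sub_pos.2 ha₁S)
    refine (ne_zero_and_div_norm_le haξ hD₁ ?_).imp_right (·.trans (le_max_right _ _))
    calc a ^ ξ * (a₁ ^ (2 - ξ) - a₁ ^ ξ * ∑' j, c j / γs j)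
        ≤ a ^ ξ * (a ^ (2 - ξ) - a ^ ξ * ∑' j, c j / γs j) :=
          mul_le_mul_of_nonneg_left (rpow_two_sub_sub_rpow_mul_le hξ ha₁ ha ha₁S.le) haξ.le
      _ = a ^ 2 - a ^ (2 * ξ) * ∑' j, c j / γs j := by
          rw [ha2ξ, mul_sub, ← Real.rpow_add hapos, add_sub_cancel, Real.rpow_two]; ring
      _ ≤ _ := sub_mul_le_norm_sq_add_sq_sub_mul hsmall (by positivity)
          (norm_tsum_ofReal_div_add_le hcnn hγpos hre.le hSsum)
  · have hk₀pos : 0 < k₀ := hk₀ ▸ div_pos (hc 0) (by positivity)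
    have hk₀T : k₀ ≤ ζ.im ^ 2 * ∑' k, c k / normSq (ζ + γs k) := by
      refine hk₀ ▸ (div_sq_add_one_le_im_sq_mul_div_normSq (hcnn 0) (hγpos 0).le hγ'pos
        hζ.le hlarge.le).trans ?_
      gcongr
      exact (summable_div_normSq_add hcnn hγpos hre hSsum).le_tsum 0
        fun k _ => div_nonneg (hcnn k) (normSq_nonneg _)
    refine (ne_zero_and_div_norm_le haξ (by positivity) ?_).imp_right
      (·.trans (le_max_left _ _))
    refine (pow_le_pow_iff_left₀ (by positivity) (norm_nonneg _) two_ne_zero).1 ?_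
    calc (a ^ ξ * √(2 * γ' * k₀)) ^ 2 = 2 * γ' * a ^ (2 * ξ) * k₀ := by
          rw [mul_pow, Real.sq_sqrt (by positivity), ha2ξ]; ring
      _ ≤ 8 * ζ.re * a ^ (2 * ξ) * (ζ.im ^ 2 * ∑' k, c k / normSq (ζ + γs k)) := by
          gcongr ?_ * _ * ?_
          linarith
      _ ≤ _ := mul_im_sq_mul_le_norm_sq_add_sq_sub_mul_sq
          (im_tsum_ofReal_div_add hcnn hγpos hre.le hSsum)

/-- Fix `ξ ∈ [0,1]`, `γ' > γ 0` and `a₁ > 0` with `a₁^(2(1-ξ)) > S`, and set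
`k₀ = c 0 / ((1 + γ 0 / γ')² + 1)`. Then for every `a ≥ a₁` and every `ζ` with `Re ζ > γ'`
one has `ℓ_a ζ ≠ 0` and
`a^ξ / ‖ℓ_a ζ‖ ≤ max (1/√(2 γ' k₀)) (1/(a₁^(2-ξ) - a₁^ξ S))`; in particular the supremum of
`a^ξ / ‖ℓ_a ζ‖` over `a ≥ a₁` and `Re ζ > γ'` is finite.
(Sequences are indexed by `ℕ`, so `c 0, γ 0` correspond to `c_1, γ_1`.) -/
theorem stmt_5
    (c γs : ℕ → ℝ)
    (hc : ∀ j, 0 < c j)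
    (hγ0 : 0 < γs 0)
    (hγmono : StrictMono γs)
    (hγtop : Filter.Tendsto γs Filter.atTop Filter.atTop)
    (hSsum : Summable fun j => c j / γs j)
    (hS : (∑' j, c j / γs j) < 1)
    (ξ : ℝ) (hξ : ξ ∈ Set.Icc (0:ℝ) 1)
    (γ' : ℝ) (hγ' : γs 0 < γ')
    (a₁ : ℝ) (ha₁ : 0 < a₁) (ha₁S : (∑' j, c j / γs j) < a₁ ^ (2 * (1 - ξ)))
    (k₀ : ℝ) (hk₀ : k₀ = c 0 / ((1 + γs 0 / γ') ^ 2 + 1))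
    (ℓ : ℝ → ℂ → ℂ)
    (hℓ : ∀ a ζ, ℓ a ζ = ζ ^ 2 + (a : ℂ) ^ 2
        - ((a ^ (2 * ξ) : ℝ) : ℂ) * ∑' k, (c k : ℂ) / (ζ + (γs k : ℂ))) :
    ∀ a : ℝ, a₁ ≤ a → ∀ ζ : ℂ, γ' < ζ.re →
      ℓ a ζ ≠ 0 ∧
      a ^ ξ / ‖ℓ a ζ‖ ≤ max (1 / Real.sqrt (2 * γ' * k₀))
        (1 / (a₁ ^ (2 - ξ) - a₁ ^ ξ * ∑' j, c j / γs j)) :=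
  stmt_5_general c γs hc hγ0 hγmono hSsum ξ hξ γ' hγ' a₁ ha₁ ha₁S k₀ hk₀ ℓ hℓ
end

section
/- Assume additionally ∑_{k=1}^∞ c_k < +∞ and fix ξ ∈ [0, 1). Then for every integer k ≥ 2 and every ε > 0 there exists A₀ > 0 such that for all a > A₀: the function ℓ_a has at least one real zero in (−γ_k, −γ_{k−1}), and every real zero of ℓ_a lying in (−γ_k, −γ_{k−1}) belongs to (−γ_k, −γ_k + ε). In other words, the real zeros of ℓ_a in the interval (−γ_k, −γ_{k−1}) converge to −γ_k as a → +∞. -/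
/-!
Between the poles, `x ∈ (-γ k, -γ (k-1))`, the terms of `∑ c j / (x + γ j)` with `j < k` are
negative, so the sum is at most `(∑ c j) / (x + γ k)`; hence for `x ≥ -γ k + ε` we get
`ℓ a x ≥ a ^ 2 - a ^ (2 ξ) (∑ c j) / ε > 0` once `a` is large, because `ξ < 1`. On the other hand
the pole of `c k / (x + γ k)` drives `ℓ a x` to `-∞` as `x ↓ -γ k`, and the sum is continuous
between the poles, so the intermediate value theorem gives a zero in `(-γ k, -γ k + ε)`.
-/

open Set Filter Topology

noncomputable def stieltjesSum (c γ : ℕ → ℝ) (x : ℝ) : ℝ := ∑' j, c j / (x + γ j)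

noncomputable def symbol (c γ : ℕ → ℝ) (ξ a x : ℝ) : ℝ :=
  x ^ 2 + a ^ 2 - a ^ (2 * ξ) * stieltjesSum c γ x

theorem summable_div_of_le_abs {c t : ℕ → ℝ} {m : ℝ} (hc : Summable c) (hm : 0 < m)
    (ht : ∀ j, m ≤ |t j|) : Summable fun j => c j / t j :=
  Summable.of_norm_bounded (hc.abs.div_const m) fun j => by
    rw [Real.norm_eq_abs, abs_div]
    exact div_le_div_of_nonneg_left (abs_nonneg _) hm (ht j)

theorem min_le_abs_add {γ : ℕ → ℝ} (hγ : Monotone γ) (k : ℕ) (x : ℝ) (j : ℕ) :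
    min (x + γ k) (-(x + γ (k - 1))) ≤ |x + γ j| := by
  rcases lt_or_ge j k with hj | hj
  · have := hγ (show j ≤ k - 1 by omega)
    calc min (x + γ k) (-(x + γ (k - 1))) ≤ -(x + γ (k - 1)) := min_le_right _ _
      _ ≤ -(x + γ j) := by linarith
      _ ≤ |x + γ j| := neg_le_abs _
  · have := hγ hj
    calc min (x + γ k) (-(x + γ (k - 1))) ≤ x + γ k := min_le_left _ _
      _ ≤ x + γ j := by linarith
      _ ≤ |x + γ j| := le_abs_self _

section

variable {c γ : ℕ → ℝ} {k : ℕ} {x : ℝ}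

theorem summable_div_add (hc : Summable c) (hγ : Monotone γ)
    (hx : x ∈ Ioo (-γ k) (-γ (k - 1))) : Summable fun j => c j / (x + γ j) :=
  summable_div_of_le_abs hc (lt_min (by linarith [hx.1]) (by linarith [hx.2]))
    (min_le_abs_add hγ k x)

theorem stieltjesSum_le (hc0 : ∀ j, 0 ≤ c j) (hc : Summable c) (hγ : Monotone γ)
    (hx : x ∈ Ioo (-γ k) (-γ (k - 1))) : stieltjesSum c γ x ≤ (∑' j, c j) / (x + γ k) := by
  rw [stieltjesSum, ← tsum_div_const]
  refine (summable_div_add hc hγ hx).tsum_le_tsum (fun j => ?_) (hc.div_const _)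
  rcases lt_or_ge j k with hj | hj
  · have := hγ (show j ≤ k - 1 by omega)
    exact (div_nonpos_of_nonneg_of_nonpos (hc0 j) (by linarith [hx.2])).trans
      (div_nonneg (hc0 j) (by linarith [hx.1]))
  · have := hγ hj
    exact div_le_div_of_nonneg_left (hc0 j) (by linarith [hx.1]) (by linarith)

theorem le_stieltjesSum (hc0 : ∀ j, 0 ≤ c j) (hc : Summable c) (hγ : Monotone γ)
    (hx : x ∈ Ioo (-γ k) (-γ (k - 1))) :
    c k / (x + γ k) + (∑' j, c j) / (x + γ (k - 1)) ≤ stieltjesSum c γ x := by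
  have hneg : x + γ (k - 1) < 0 := by linarith [hx.2]
  have hpos : ∀ j, k ≤ j → 0 < x + γ j := fun j hj => by linarith [hx.1, hγ hj]
  have hsingle : Summable fun j => if j = k then c k / (x + γ k) else 0 :=
    (hasSum_ite_eq k _).summable
  calc c k / (x + γ k) + (∑' j, c j) / (x + γ (k - 1))
      = ∑' j, (c j / (x + γ (k - 1)) + if j = k then c k / (x + γ k) else 0) := by
        rw [(hc.div_const _).tsum_add hsingle, tsum_div_const, tsum_ite_eq, add_comm]
    _ ≤ stieltjesSum c γ x := by
        refine ((hc.div_const _).add hsingle).tsum_le_tsum (fun j => ?_) (summable_div_add hc hγ hx)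
        have hdiv : c j / (x + γ (k - 1)) ≤ 0 := div_nonpos_of_nonneg_of_nonpos (hc0 j) hneg.le
        rcases lt_trichotomy j k with hj | rfl | hj
        · have : x + γ j ≤ x + γ (k - 1) := by linarith [hγ (show j ≤ k - 1 by omega)]
          rw [if_neg hj.ne, add_zero]
          simpa only [div_eq_mul_inv] using
            mul_le_mul_of_nonneg_left ((inv_le_inv_of_neg hneg (by linarith)).2 this) (hc0 j)
        · rw [if_pos rfl]; linarith
        · rw [if_neg hj.ne', add_zero]
          exact hdiv.trans (div_nonneg (hc0 j) (hpos j hj.le).le)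

theorem continuousOn_stieltjesSum (hc : Summable c) (hγ : Monotone γ) {u v : ℝ}
    (hu : -γ k < u) (hv : v < -γ (k - 1)) : ContinuousOn (stieltjesSum c γ) (Icc u v) := by
  set m := min (u + γ k) (-(v + γ (k - 1)))
  have hm : 0 < m := lt_min (by linarith) (by linarith)
  have hsep : ∀ x ∈ Icc u v, ∀ j, m ≤ |x + γ j| := fun x hx j =>
    (min_le_min (by linarith [hx.1]) (by linarith [hx.2])).trans (min_le_abs_add hγ k x j)
  refine continuousOn_tsum (u := fun j => |c j| / m) (fun j => ?_) (hc.abs.div_const m)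
    fun j x hx => ?_
  · exact continuousOn_const.div (by fun_prop) fun x hx => abs_pos.mp (hm.trans_le (hsep x hx j))
  · rw [Real.norm_eq_abs, abs_div]
    exact div_le_div_of_nonneg_left (abs_nonneg _) hm (hsep x hx j)

theorem tendsto_stieltjesSum_nhdsGT (hc0 : ∀ j, 0 ≤ c j) (hck : 0 < c k) (hc : Summable c)
    (hγ : StrictMono γ) (hk : 1 ≤ k) : Tendsto (stieltjesSum c γ) (𝓝[>] (-γ k)) atTop := by
  have hγk : γ (k - 1) < γ k := hγ (by omega)
  have hpole : Tendsto (fun x => c k / (x + γ k)) (𝓝[>] (-γ k)) atTop := by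
    have h : Tendsto (fun x => x + γ k) (𝓝[>] (-γ k)) (𝓝[>] 0) := by
      refine tendsto_nhdsWithin_iff.2 ⟨?_, eventually_nhdsWithin_of_forall fun x hx => ?_⟩
      · simpa using (continuous_add_const (γ k)).continuousWithinAt.tendsto (x := -γ k)
      · simpa [neg_lt_iff_pos_add] using hx
    simpa only [div_eq_mul_inv, Pi.inv_apply] using h.inv_tendsto_nhdsGT_zero.const_mul_atTop hck
  have hrest : Tendsto (fun x => (∑' j, c j) / (x + γ (k - 1))) (𝓝[>] (-γ k))
      (𝓝 ((∑' j, c j) / (-γ k + γ (k - 1)))) :=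
    tendsto_nhdsWithin_of_tendsto_nhds <| tendsto_const_nhds.div
      ((continuous_add_const _).tendsto _) (by linarith)
  refine tendsto_atTop_mono' _ ?_ (hpole.atTop_add hrest)
  filter_upwards [Ioo_mem_nhdsGT (show -γ k < -γ (k - 1) by linarith)] with x hx
  exact le_stieltjesSum hc0 hc hγ.monotone hx

variable {ξ a : ℝ}

theorem symbol_pos (hc0 : ∀ j, 0 ≤ c j) (hc : Summable c) (hγ : Monotone γ) (ha : 0 ≤ a)
    (hx : x ∈ Ioo (-γ k) (-γ (k - 1))) {e : ℝ} (he : 0 < e) (hxe : e ≤ x + γ k)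
    (hlarge : a ^ (2 * ξ) * ((∑' j, c j) / e) < a ^ 2) : 0 < symbol c γ ξ a x := by
  have hT : 0 ≤ ∑' j, c j := tsum_nonneg hc0
  have hS : a ^ (2 * ξ) * stieltjesSum c γ x ≤ a ^ (2 * ξ) * ((∑' j, c j) / e) :=
    mul_le_mul_of_nonneg_left ((stieltjesSum_le hc0 hc hγ hx).trans
      (div_le_div_of_nonneg_left hT he hxe)) (Real.rpow_nonneg ha _)
  unfold symbol
  nlinarith [sq_nonneg x]

theorem tendsto_symbol_nhdsGT (hc0 : ∀ j, 0 ≤ c j) (hck : 0 < c k) (hc : Summable c)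
    (hγ : StrictMono γ) (hk : 1 ≤ k) (ha : 0 < a) :
    Tendsto (symbol c γ ξ a) (𝓝[>] (-γ k)) atBot := by
  have hsq : Tendsto (fun x : ℝ => x ^ 2 + a ^ 2) (𝓝[>] (-γ k)) (𝓝 ((-γ k) ^ 2 + a ^ 2)) :=
    tendsto_nhdsWithin_of_tendsto_nhds
      ((by fun_prop : Continuous fun x : ℝ => x ^ 2 + a ^ 2).tendsto _)
  exact hsq.add_atBot (tendsto_neg_atTop_atBot.comp
    ((tendsto_stieltjesSum_nhdsGT hc0 hck hc hγ hk).const_mul_atTop (Real.rpow_pos_of_pos ha _)))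

theorem exists_symbol_eq_zero (hc0 : ∀ j, 0 ≤ c j) (hck : 0 < c k) (hc : Summable c)
    (hγ : StrictMono γ) (hk : 1 ≤ k) (ha : 0 < a) {v : ℝ} (hv : v ∈ Ioo (-γ k) (-γ (k - 1)))
    (hpos : 0 < symbol c γ ξ a v) : ∃ μ ∈ Ioo (-γ k) v, symbol c γ ξ a μ = 0 := by
  obtain ⟨u, hu_neg, hu⟩ := (((tendsto_symbol_nhdsGT hc0 hck hc hγ hk ha).eventually_lt_atBot 0).and
    (Ioo_mem_nhdsGT hv.1)).exists
  have hcont : ContinuousOn (symbol c γ ξ a) (Icc u v) :=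
    (continuousOn_id.pow 2).add continuousOn_const |>.sub <|
      continuousOn_const.mul (continuousOn_stieltjesSum hc hγ.monotone hu.1 hv.2)
  obtain ⟨μ, hμ, hμ0⟩ := intermediate_value_Icc hu.2.le hcont ⟨hu_neg.le, hpos.le⟩
  exact ⟨μ, ⟨hu.1.trans_le hμ.1, hμ.2.lt_of_ne (by rintro rfl; linarith)⟩, hμ0⟩

theorem eventually_rpow_mul_lt_sq (hξ : ξ < 1) (M : ℝ) :
    ∀ᶠ a : ℝ in atTop, a ^ (2 * ξ) * M < a ^ 2 := by
  filter_upwards [(tendsto_rpow_atTop (by linarith : 0 < 2 - 2 * ξ)).eventually_gt_atTop M,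
    eventually_gt_atTop 0] with a hM ha
  calc a ^ (2 * ξ) * M < a ^ (2 * ξ) * a ^ (2 - 2 * ξ) :=
        mul_lt_mul_of_pos_left hM (Real.rpow_pos_of_pos ha _)
    _ = a ^ 2 := by rw [← Real.rpow_add ha, add_sub_cancel, Real.rpow_two]

end

theorem stmt_13_general
    (c γs : ℕ → ℝ)
    (hc : ∀ j, 0 < c j)
    (hγmono : StrictMono γs)
    (hcsum : Summable c)
    (ξ : ℝ) (hξ1 : ξ < 1)
    (ℓ : ℝ → ℝ → ℝ)
    (hℓ : ∀ a x : ℝ, ℓ a x = x ^ 2 + a ^ 2 - a ^ (2 * ξ) * ∑' j, c j / (x + γs j)) :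
    ∀ k : ℕ, 1 ≤ k → ∀ ε : ℝ, 0 < ε → ∃ A₀ : ℝ, 0 < A₀ ∧ ∀ a : ℝ, A₀ < a →
      (∃ μ ∈ Set.Ioo (-γs k) (-γs (k - 1)), ℓ a μ = 0) ∧
      (∀ μ ∈ Set.Ioo (-γs k) (-γs (k - 1)), ℓ a μ = 0 → μ < -γs k + ε) := by
  obtain rfl : ℓ = symbol c γs ξ := funext₂ hℓ
  intro k hk ε hε
  have hc0 : ∀ j, 0 ≤ c j := fun j => (hc j).le
  have hγk : γs (k - 1) < γs k := hγmono (by omega)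
  set e := min ε ((γs k - γs (k - 1)) / 2)
  have he : 0 < e := lt_min hε (by linarith)
  obtain ⟨A, hA⟩ := eventually_atTop.1 (eventually_rpow_mul_lt_sq hξ1 ((∑' j, c j) / e))
  refine ⟨max 1 A, by positivity, fun a ha => ?_⟩
  have ha0 : 0 < a := one_pos.trans_le (le_max_left _ _) |>.trans ha
  have hpos : ∀ x ∈ Ioo (-γs k) (-γs (k - 1)), -γs k + e ≤ x → 0 < symbol c γs ξ a x :=
    fun x hx hxe => symbol_pos hc0 hcsum hγmono.monotone ha0.le hx he (by linarith)
      (hA a (le_max_right _ _ |>.trans ha.le))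
  have hv : -γs k + e ∈ Ioo (-γs k) (-γs (k - 1)) :=
    ⟨by linarith, by linarith [min_le_right ε ((γs k - γs (k - 1)) / 2)]⟩
  obtain ⟨μ, hμ, hμ0⟩ :=
    exists_symbol_eq_zero hc0 (hc k) hcsum hγmono hk ha0 hv (hpos _ hv le_rfl)
  refine ⟨⟨μ, ⟨hμ.1, hμ.2.trans hv.2⟩, hμ0⟩, fun μ hμ hμ0 => ?_⟩
  by_contra! hμε
  exact (hpos μ hμ (by linarith [min_le_left ε ((γs k - γs (k - 1)) / 2)])).ne' hμ0

/-- Assume additionally `∑ₖ c k < ∞` and fix `ξ ∈ [0, 1)`. Then for every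
integer `k ≥ 2` (here `k ≥ 1`, `0`-based) and every `ε > 0` there is `A₀ > 0` such that for
all `a > A₀`: `ℓ_a` has at least one real zero in `(-γ k, -γ (k-1))`, and every real zero of
`ℓ_a` in `(-γ k, -γ (k-1))` lies in `(-γ k, -γ k + ε)`; i.e. the real zeros of `ℓ_a` in this
interval converge to `-γ k` as `a → +∞`.
(Indexing is `0`-based: `c 0, γ 0` correspond to `c_1, γ_1`.) -/
theorem stmt_13
    (c γs : ℕ → ℝ)
    (hc : ∀ j, 0 < c j)
    (hγ0 : 0 < γs 0)
    (hγmono : StrictMono γs)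
    (hγtop : Filter.Tendsto γs Filter.atTop Filter.atTop)
    (hSsum : Summable fun j => c j / γs j)
    (hS : (∑' j, c j / γs j) < 1)
    (hcsum : Summable c)
    (ξ : ℝ) (hξ0 : 0 ≤ ξ) (hξ1 : ξ < 1)
    (ℓ : ℝ → ℝ → ℝ)
    (hℓ : ∀ a x : ℝ, ℓ a x = x ^ 2 + a ^ 2 - a ^ (2 * ξ) * ∑' j, c j / (x + γs j)) :
    ∀ k : ℕ, 1 ≤ k → ∀ ε : ℝ, 0 < ε → ∃ A₀ : ℝ, 0 < A₀ ∧ ∀ a : ℝ, A₀ < a →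
      (∃ μ ∈ Set.Ioo (-γs k) (-γs (k - 1)), ℓ a μ = 0) ∧
      (∀ μ ∈ Set.Ioo (-γs k) (-γs (k - 1)), ℓ a μ = 0 → μ < -γs k + ε) :=
  stmt_13_general c γs hc hγmono hcsum ξ hξ1 ℓ hℓ
end
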